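/- For all even n ≥ 2 and 1 ≤ k ≤ n/2, the number of words of length n in the language generated by S → ā S b U | ε, U → a U b U | ε, with exactly k occurrences of ā (hence n/2 - k occurrences of a and n/2 occurrences of b) equals C(n-k-1, n/2 - 1) - C(n-k-1, n/2). -/

import Mathlib

inductive NC : Type
  | a | abar | b
deriving DecidableEq

mutual
/-- S → ā S b U | ε -/
inductive IsSnc : List NC → Prop
  | nil : IsSnc []
  | node {w v : List NC} : IsSnc w → IsUnc v →
      IsSnc (NC.abar :: w ++ NC.b :: v)
/-- U → a U b U | ε -/
inductive IsUnc : List NC → Prop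
  | nil : IsUnc []
  | node {w v : List NC} : IsUnc w → IsUnc v →
      IsUnc (NC.a :: w ++ NC.b :: v)
end

/-!
A word of `S` is `ā ⋯ ā b U b U ⋯ b U`, with as many `b` as `ā`. Reading `a` as an up-step and
`b` as a down-step, the `U`-words are the Dyck paths, so a word with `k ≥ 1` letters `ā` is
`āᵏ b t` with `t` a path from height `k - 1` down to `0` that never goes below `0`. By the
reflection principle there are `C(ℓ, r) - C(ℓ, k + r)` such paths of length `ℓ = k - 1 + 2r`,
and `C(ℓ, r) = C(ℓ, n/2 - 1)` by symmetry.
-/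

open Finset

inductive IsBallotPath : ℕ → List NC → Prop
  | nil : IsBallotPath 0 []
  | cons_a {h w} : IsBallotPath (h + 1) w → IsBallotPath h (NC.a :: w)
  | cons_b {h w} : IsBallotPath h w → IsBallotPath (h + 1) (NC.b :: w)

namespace IsBallotPath

theorem append {h w} (hw : IsBallotPath h w) {h' s} (hs : IsBallotPath h' s) :
    IsBallotPath (h + h') (w ++ s) := by
  induction hw with
  | nil => simpa using hs
  | cons_a _ ih => exact cons_a (by simpa [Nat.add_right_comm] using ih)
  | cons_b _ ih => simpa [Nat.add_right_comm] using cons_b ih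

/-- First-passage decomposition. -/
theorem exists_eq_append_b {t : List NC} {h} (ht : IsBallotPath (h + 1) t) :
    ∃ t' v, t = t' ++ NC.b :: v ∧ IsBallotPath h t' ∧ IsBallotPath 0 v := by
  induction t generalizing h with
  | nil => cases ht
  | cons x t ih =>
    cases ht with
    | cons_a ht =>
      obtain ⟨t', v, rfl, ht', hv⟩ := ih ht
      exact ⟨NC.a :: t', v, rfl, cons_a ht', hv⟩
    | cons_b ht =>
      cases h with
      | zero => exact ⟨[], t, rfl, nil, ht⟩
      | succ h =>
        obtain ⟨t', v, rfl, ht', hv⟩ := ih ht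
        exact ⟨NC.b :: t', v, rfl, cons_b ht', hv⟩

theorem abar_notMem {h w} (hw : IsBallotPath h w) : NC.abar ∉ w := by
  induction hw <;> simp_all

@[simp]
theorem nil_iff {h} : IsBallotPath h [] ↔ h = 0 :=
  ⟨by rintro ⟨⟩; rfl, by rintro rfl; exact nil⟩

@[simp]
theorem cons_a_iff {h w} : IsBallotPath h (NC.a :: w) ↔ IsBallotPath (h + 1) w :=
  ⟨by rintro ⟨⟩; assumption, cons_a⟩

@[simp]
theorem cons_b_iff {h w} : IsBallotPath h (NC.b :: w) ↔ ∃ h', h = h' + 1 ∧ IsBallotPath h' w :=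
  ⟨by rintro ⟨⟩; exact ⟨_, rfl, by assumption⟩, by rintro ⟨h', rfl, hw⟩; exact cons_b hw⟩

@[simp]
theorem not_cons_abar {h w} : ¬IsBallotPath h (NC.abar :: w) := by
  rintro ⟨⟩

theorem le_length {h w} (hw : IsBallotPath h w) : h ≤ w.length := by
  induction hw <;> simp only [List.length_nil, List.length_cons] <;> omega

theorem isUnc {v : List NC} (hv : IsBallotPath 0 v) : IsUnc v := by
  cases hv with
  | nil => exact .nil
  | cons_a hv =>
    obtain ⟨t, u, rfl, ht, hu⟩ := hv.exists_eq_append_b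
    exact .node ht.isUnc hu.isUnc
termination_by v.length
decreasing_by all_goals subst_vars; simp only [List.length_cons, List.length_append]; omega

end IsBallotPath

theorem IsUnc.isBallotPath : ∀ {v : List NC}, IsUnc v → IsBallotPath 0 v
  | _, .nil => .nil
  | _, .node hw hv => .cons_a (hw.isBallotPath.append (.cons_b hv.isBallotPath))

theorem IsSnc.eq_nil_or_eq_replicate_append : ∀ {w : List NC}, IsSnc w →
    w = [] ∨ ∃ h t, w = List.replicate (h + 1) NC.abar ++ NC.b :: t ∧ IsBallotPath h t
  | _, .nil => .inl rfl
  | _, @IsSnc.node _ v hw hv => by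
    right
    rcases hw.eq_nil_or_eq_replicate_append with rfl | ⟨h, t, rfl, ht⟩
    · exact ⟨0, v, rfl, hv.isBallotPath⟩
    · exact ⟨h + 1, t ++ NC.b :: v, by simp [List.replicate_succ],
        ht.append (.cons_b hv.isBallotPath)⟩

theorem isSnc_replicate_abar_append_b {h} {t : List NC} (ht : IsBallotPath h t) :
    IsSnc (List.replicate (h + 1) NC.abar ++ NC.b :: t) := by
  induction h generalizing t with
  | zero => exact .node .nil ht.isUnc
  | succ h ih =>
    obtain ⟨t', v, rfl, ht', hv⟩ := ht.exists_eq_append_b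
    simpa [List.replicate_succ] using IsSnc.node (ih ht') hv.isUnc

theorem isSnc_and_count_abar_eq_iff {h} {w : List NC} :
    IsSnc w ∧ w.count NC.abar = h + 1 ↔
      ∃ t, w = List.replicate (h + 1) NC.abar ++ NC.b :: t ∧ IsBallotPath h t := by
  constructor
  · rintro ⟨hw, hcount⟩
    rcases hw.eq_nil_or_eq_replicate_append with rfl | ⟨h', t, rfl, ht⟩
    · simp at hcount
    · simp [List.count_eq_zero_of_not_mem ht.abar_notMem] at hcount
      exact ⟨t, by rw [hcount], hcount ▸ ht⟩
  · rintro ⟨t, rfl, ht⟩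
    exact ⟨isSnc_replicate_abar_append_b ht,
      by simp [List.count_eq_zero_of_not_mem ht.abar_notMem]⟩

def ballotPaths : ℕ → ℕ → Finset (List NC)
  | 0, 0 => {[]}
  | 0, _ + 1 => ∅
  | ℓ + 1, 0 => (ballotPaths ℓ 1).image (NC.a :: ·)
  | ℓ + 1, h + 1 => (ballotPaths ℓ (h + 2)).image (NC.a :: ·) ∪ (ballotPaths ℓ h).image (NC.b :: ·)

theorem mem_ballotPaths {ℓ h} {w : List NC} :
    w ∈ ballotPaths ℓ h ↔ IsBallotPath h w ∧ w.length = ℓ := by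
  induction ℓ generalizing h w with
  | zero => cases h <;> cases w <;> simp [ballotPaths]
  | succ ℓ ih => cases h <;> rcases w with _ | ⟨_ | _ | _, w⟩ <;> simp [ballotPaths, ih]

theorem card_ballotPaths_of_lt {ℓ h} (hℓ : ℓ < h) : #(ballotPaths ℓ h) = 0 := by
  rw [card_eq_zero, eq_empty_iff_forall_notMem]
  intro w hw
  obtain ⟨hpath, rfl⟩ := mem_ballotPaths.1 hw
  exact hℓ.not_ge hpath.le_length

theorem card_ballotPaths_succ_zero (ℓ : ℕ) :
    #(ballotPaths (ℓ + 1) 0) = #(ballotPaths ℓ 1) :=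
  card_image_of_injective _ List.cons_injective

theorem card_ballotPaths_succ_succ (ℓ h : ℕ) :
    #(ballotPaths (ℓ + 1) (h + 1)) = #(ballotPaths ℓ (h + 2)) + #(ballotPaths ℓ h) := by
  rw [ballotPaths, card_union_of_disjoint, card_image_of_injective _ List.cons_injective,
    card_image_of_injective _ List.cons_injective]
  simp [disjoint_left]

/-- The reflection-principle count, checked against the first-step recursion by Pascal's rule. -/
theorem card_ballotPaths_add_choose {ℓ} (h r : ℕ) (hℓ : ℓ = h + 2 * r) :
    #(ballotPaths ℓ h) + ℓ.choose (h + r + 1) = ℓ.choose r := by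
  induction ℓ generalizing h r with
  | zero =>
    obtain ⟨rfl, rfl⟩ : h = 0 ∧ r = 0 := by omega
    simp [ballotPaths]
  | succ ℓ ih =>
    rcases h with _ | h
    · obtain ⟨r, rfl⟩ : ∃ r', r = r' + 1 := ⟨r - 1, by omega⟩
      have ih₁ : #(ballotPaths ℓ 1) + ℓ.choose (r + 1 + 1) = ℓ.choose r := by
        convert ih 1 r (by omega) using 3; omega
      rw [card_ballotPaths_succ_zero, zero_add, Nat.choose_succ_succ', Nat.choose_succ_succ' ℓ r]
      omega
    · rw [card_ballotPaths_succ_succ]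
      rcases r with _ | r
      · obtain rfl : ℓ = h := by omega
        have ih₀ := ih ℓ 0 (by omega)
        rw [Nat.choose_eq_zero_of_lt (by omega)] at ih₀
        rw [card_ballotPaths_of_lt (by omega), Nat.choose_eq_zero_of_lt (by omega)]
        simpa using ih₀
      · have ih₁ : #(ballotPaths ℓ (h + 2)) + ℓ.choose (h + r + 2 + 1) = ℓ.choose r := by
          convert ih (h + 2) r (by omega) using 3; omega
        have ih₂ : #(ballotPaths ℓ h) + ℓ.choose (h + r + 2) = ℓ.choose (r + 1) := by
          convert ih h (r + 1) (by omega) using 3; omega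
        rw [show h + 1 + (r + 1) + 1 = h + r + 2 + 1 by omega,
          Nat.choose_succ_succ', Nat.choose_succ_succ' ℓ r]
        omega

theorem nc_count (n k : ℕ) (hn : Even n) (hn2 : 2 ≤ n)
    (hk1 : 1 ≤ k) (hk2 : k ≤ n / 2) :
    Set.ncard {w : List NC |
        IsSnc w ∧ w.length = n ∧ w.count NC.abar = k}
      = Nat.choose (n - k - 1) (n / 2 - 1) - Nat.choose (n - k - 1) (n / 2) := by
  obtain ⟨m, hm⟩ := hn
  obtain ⟨h, rfl⟩ : ∃ h, k = h + 1 := ⟨k - 1, by omega⟩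
  obtain ⟨r, rfl⟩ : ∃ r, m = h + 1 + r := ⟨m - (h + 1), by omega⟩
  have hset : {w : List NC | IsSnc w ∧ w.length = n ∧ w.count NC.abar = h + 1} =
      (List.replicate (h + 1) NC.abar ++ NC.b :: ·) '' ballotPaths (h + 2 * r) h := by
    ext w
    simp only [Set.mem_ofPred_eq, and_left_comm (b := w.length = n),
      isSnc_and_count_abar_eq_iff, Set.mem_image, mem_coe, mem_ballotPaths]
    constructor
    · rintro ⟨hlen, t, rfl, ht⟩
      exact ⟨t, ⟨ht, by simp at hlen; omega⟩, rfl⟩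
    · rintro ⟨t, ⟨ht, hlen⟩, rfl⟩
      exact ⟨by simp; omega, t, rfl, ht⟩
  have hcount := card_ballotPaths_add_choose h r rfl
  have hsymm := Nat.choose_symm_of_eq_add (n := h + 2 * r) (a := r) (b := h + r) (by omega)
  rw [hset, Set.ncard_image_of_injective _ (fun _ _ h ↦ by simpa using h),
    Set.ncard_coe_finset, show n / 2 = h + r + 1 by omega, show n - (h + 1) - 1 = h + 2 * r by omega,
    Nat.add_sub_cancel]
  omega
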